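/- For n ≥ 3, the inverse of the circulant matrix P = circ(P₁, ..., Pₙ) over ℚ is the circulant matrix circ(p₁, p₂, ..., pₙ) where p₁ = (1/gₙ)(1 + 2Pₙ^{n-3}/(P₁-Pₙ₊₁)^{n-2} + Σ_{k=1}^{n-3} P_{n-k}Pₙ^{k-1}/(P₁-Pₙ₊₁)^k), p₂ = (1/gₙ)(-2 + Σ_{k=1}^{n-2} P_{n-k-1}Pₙ^{k-1}/(P₁-Pₙ₊₁)^k), and p_i = -Pₙ^{i-3}/(gₙ (P₁-Pₙ₊₁)^{i-2}) for 3 ≤ i ≤ n, with gₙ = P₁ - 2Pₙ + Σ_{k=2}^{n-1} P_{k-1}(Pₙ/(P₁-Pₙ₊₁))^{n-k}. -/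

import Mathlib

/-!
Let `S` be the cyclic shift, so `Sⁿ = 1` and `circMat n c = ∑ₖ c (k + 1) • Sᵏ`, and put
`α = Pₙ`, `β = P₁ - Pₙ₊₁`. Truncating the Pell generating function `1 / (1 - 2x - x²)` at degree
`n` gives `(1 - 2S - S²) · circ(P) = β - αS`. The claimed coefficients satisfy
`β pₖ₊₁ - α pₖ = 1, -2, -1, 0, …, 0` cyclically, i.e. `(β - αS) · circ(p) = 1 - 2S - S²`, so
`(β - αS) · circ(p) · circ(P) = β - αS`; and `β - αS` is cancellable since multiplying it by a
geometric sum gives `βⁿ - αⁿ ≠ 0` (as `|α| < |β|`). The sums occurring in `g`, `p₁`, `p₂` are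
reversed Pell sums `∑ᵢ P_{L-i} rⁱ` with `r = α / β`, which are evaluated in closed form by
`(r² - 2r - 1) ∑ᵢ P_{L-i} rⁱ = r^{L+1} - P_{L+1} r - P_L`.
-/

def pell : ℕ → ℚ
  | 0 => 0
  | 1 => 1
  | n + 2 => 2 * pell (n + 1) + pell n

def pellLucas : ℕ → ℚ
  | 0 => 2
  | 1 => 2
  | n + 2 => 2 * pellLucas (n + 1) + pellLucas n

/-- Circulant matrix `circ (c₁, …, cₙ)` with `(i,j)` entry `c ((j - i mod n) + 1)`. -/
def circMat (n : ℕ) (c : ℕ → ℚ) : Matrix (Fin n) (Fin n) ℚ :=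
  fun i j => c ((j - i : Fin n).val + 1)

open Finset

@[simp] lemma pell_one : pell 1 = 1 := rfl

lemma pell_add_two (n : ℕ) : pell (n + 2) = 2 * pell (n + 1) + pell n := rfl

lemma pell_nonneg : ∀ n, 0 ≤ pell n
  | 0 => le_rfl
  | 1 => zero_le_one
  | n + 2 => by rw [pell_add_two]; linarith [pell_nonneg n, pell_nonneg (n + 1)]

lemma two_le_pell {n : ℕ} (hn : 2 ≤ n) : 2 ≤ pell n := by
  induction n, hn using Nat.le_induction with
  | base => norm_num [pell]
  | succ n hn ih =>
    obtain ⟨m, rfl⟩ : ∃ m, n = m + 1 := ⟨n - 1, by omega⟩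
    rw [pell_add_two]; linarith [pell_nonneg m]

lemma abs_pell_lt_abs_one_sub_pell_succ {n : ℕ} (hn : 2 ≤ n) :
    |pell n| < |pell 1 - pell (n + 1)| := by
  obtain ⟨m, rfl⟩ : ∃ m, n = m + 1 := ⟨n - 1, by omega⟩
  have h := two_le_pell hn
  rw [abs_of_nonneg (pell_nonneg _), abs_of_neg] <;>
    simp only [pell_add_two, pell_one] <;> linarith [pell_nonneg m]

lemma pell_add_one_and_pell_eq {m : ℕ} {α β : ℚ} (hα : α = pell (m + 2))
    (hβ : β = 1 - pell (m + 3)) : pell (m + 1) = 1 - β - 2 * α ∧ pell m = 5 * α + 2 * β - 2 := by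
  have h : pell (m + 1) = 1 - β - 2 * α := by
    linear_combination hβ - pell_add_two (m + 1) + 2 * hα
  exact ⟨h, by linear_combination -hα - pell_add_two m - 2 * h⟩

def pellRevSum (r : ℚ) (L : ℕ) : ℚ := ∑ i ∈ range L, pell (L - i) * r ^ i

lemma pellRevSum_succ (r : ℚ) (L : ℕ) :
    pellRevSum r (L + 1) = pell (L + 1) + r * pellRevSum r L := by
  simp only [pellRevSum, sum_range_succ', mul_sum, Nat.add_sub_add_right, Nat.sub_zero, pow_zero,
    mul_one, pow_succ]
  rw [add_comm]
  exact congrArg _ (sum_congr rfl fun i _ => by ring)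

lemma mul_pellRevSum (r : ℚ) (L : ℕ) :
    (r ^ 2 - 2 * r - 1) * pellRevSum r L = r ^ (L + 1) - pell (L + 1) * r - pell L := by
  induction L with
  | zero => simp [pellRevSum, pell]
  | succ L ih =>
    rw [pellRevSum_succ, pell_add_two]
    linear_combination r * ih

lemma sum_Icc_two_pell_mul_pow (r : ℚ) (n : ℕ) :
    ∑ k ∈ Icc 2 (n - 1), pell (k - 1) * r ^ (n - k) = r * pellRevSum r (n - 2) := by
  rw [← Ico_add_one_right_eq_Icc, sum_Ico_eq_sum_range, pellRevSum, mul_sum,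
    ← sum_range_reflect, show n - 1 + 1 - 2 = n - 2 by omega]
  refine sum_congr rfl fun i hi => ?_
  have := mem_range.mp hi
  rw [show 2 + (n - 2 - 1 - i) - 1 = n - 2 - i by omega,
    show n - (2 + (n - 2 - 1 - i)) = i + 1 by omega, pow_succ]
  ring

lemma sum_Icc_one_mul_pow_div_pow (c : ℕ → ℚ) (α β : ℚ) (L : ℕ) :
    ∑ k ∈ Icc 1 L, c k * α ^ (k - 1) / β ^ k = (∑ i ∈ range L, c (i + 1) * (α / β) ^ i) / β := by
  rw [← Ico_add_one_right_eq_Icc, sum_Ico_eq_sum_range, sum_div, Nat.add_sub_cancel]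
  refine sum_congr rfl fun i _ => ?_
  rw [add_comm 1 i, Nat.add_sub_cancel, div_pow, pow_succ]
  ring

lemma sum_Icc_pell_sub_sub_one_div (α β : ℚ) (n : ℕ) :
    ∑ k ∈ Icc 1 (n - 2), pell (n - k - 1) * α ^ (k - 1) / β ^ k
      = pellRevSum (α / β) (n - 2) / β := by
  rw [sum_Icc_one_mul_pow_div_pow (fun k => pell (n - k - 1)), pellRevSum]
  simp only [show ∀ i, n - (i + 1) - 1 = n - 2 - i from fun i => by omega]

lemma two_mul_pow_div_add_sum_Icc_pell_sub {n : ℕ} (hn : 3 ≤ n) (α β : ℚ) :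
    2 * α ^ (n - 3) / β ^ (n - 2) + ∑ k ∈ Icc 1 (n - 3), pell (n - k) * α ^ (k - 1) / β ^ k
      = (pellRevSum (α / β) (n - 1) - (α / β) ^ (n - 2)) / β := by
  obtain ⟨m, rfl⟩ : ∃ m, n = m + 3 := ⟨n - 3, by omega⟩
  rw [sum_Icc_one_mul_pow_div_pow (fun k => pell (m + 3 - k)), pellRevSum]
  simp only [show m + 3 - 1 = m + 2 by omega, show m + 3 - 2 = m + 1 by omega,
    show m + 3 - 3 = m by omega, show ∀ i, m + 3 - (i + 1) = m + 2 - i from fun i => by omega,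
    sum_range_succ, show m + 2 - m = 2 by omega, show m + 2 - (m + 1) = 1 by omega, pell_one]
  rw [div_pow, pow_succ β, show pell 2 = 2 by norm_num [pell]]
  ring

def cycShift (n : ℕ) [NeZero n] : Matrix (Fin n) (Fin n) ℚ :=
  Matrix.of fun i j => if j = i + 1 then 1 else 0

section CycShift

open Fin.NatCast

variable {n : ℕ} [NeZero n]

lemma cycShift_pow_apply (k : ℕ) (i j : Fin n) :
    (cycShift n ^ k) i j = if j = i + (k : Fin n) then 1 else 0 := by
  induction k generalizing j with
  | zero => simp [Matrix.one_apply, eq_comm]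
  | succ k ih =>
    rw [pow_succ, Matrix.mul_apply]
    simp only [ih]
    simp only [cycShift, Matrix.of_apply, ite_mul, one_mul, zero_mul, sum_ite_eq', mem_univ,
      if_true, Nat.cast_succ, add_assoc]

lemma cycShift_pow_self : cycShift n ^ n = 1 := by
  ext i j
  simp [cycShift_pow_apply, Matrix.one_apply, eq_comm]

lemma circMat_eq_sum (c : ℕ → ℚ) : circMat n c = ∑ k ∈ range n, c (k + 1) • cycShift n ^ k := by
  ext i j
  rw [← Fin.sum_univ_eq_sum_range (fun k => c (k + 1) • cycShift n ^ k)]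
  simp [Matrix.sum_apply, cycShift_pow_apply, circMat, ← sub_eq_iff_eq_add']

end CycShift

lemma mul_sum_pell_smul_pow {A : Type*} [Ring A] [Algebra ℚ A] (x : A) (N : ℕ) :
    (1 - 2 * x - x ^ 2) * ∑ k ∈ range N, pell (k + 1) • x ^ k
      = 1 - pell (N + 1) • x ^ N - pell N • x ^ (N + 1) := by
  induction N with
  | zero => simp [pell]
  | succ N ih =>
    have hx : (1 - 2 * x - x ^ 2) * x ^ N = x ^ N - (2 : ℚ) • x ^ (N + 1) - x ^ (N + 2) := by
      rw [two_smul, pow_succ' x N, add_comm N 2, pow_add x 2 N]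
      noncomm_ring
    rw [sum_range_succ, mul_add, ih, mul_smul_comm, hx, pell_add_two]
    module

section ShiftAlgebra

variable {K A : Type*} [Field K] [Ring A] [Algebra K A] {x : A}

lemma smul_one_sub_smul_mul_sum {N : ℕ} (hx : x ^ (N + 1) = 1) (a b : K) (c : ℕ → K) :
    (b • 1 - a • x) * ∑ k ∈ range (N + 1), c (k + 1) • x ^ k
      = (b * c 1 - a * c (N + 1)) • 1
        + ∑ k ∈ range N, (b * c (k + 2) - a * c (k + 1)) • x ^ (k + 1) := by
  simp only [sub_mul, mul_sum, smul_mul_smul_comm, one_mul, ← pow_succ']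
  rw [sum_sub_distrib, sum_range_succ' (fun k => (b * c (k + 1)) • x ^ k),
    sum_range_succ (fun k => (a * c (k + 1)) • x ^ (k + 1)), hx]
  simp only [sub_smul, sum_sub_distrib, pow_zero]
  abel

lemma isLeftRegular_smul_one_sub_smul {n : ℕ} (hx : x ^ n = 1) {a b : K} (hab : b ^ n ≠ a ^ n) :
    IsLeftRegular (b • 1 - a • x) := by
  have hgeom := (Algebra.commute_algebraMap_left b (a • x)).geom_sum₂_mul n
  rw [Algebra.algebraMap_eq_smul_one] at hgeom
  simp only [smul_pow, one_pow, hx, ← sub_smul] at hgeom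
  obtain ⟨G, hG⟩ : ∃ G : A, G * (b • 1 - a • x) = (b ^ n - a ^ n) • 1 := ⟨_, hgeom⟩
  intro X Y (hXY : (b • 1 - a • x) * X = (b • 1 - a • x) * Y)
  apply smul_right_injective A (sub_ne_zero.mpr hab)
  change (b ^ n - a ^ n) • X = (b ^ n - a ^ n) • Y
  rw [← smul_one_mul, ← hG, mul_assoc, hXY, ← mul_assoc, hG, smul_one_mul]

end ShiftAlgebra

theorem inv_circMat_pell {n : ℕ} (hn : 3 ≤ n) {α β : ℚ} (hα : α = pell n)
    (hβ : β = pell 1 - pell (n + 1)) (hαβ : β ^ n ≠ α ^ n) {p : ℕ → ℚ}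
    (h₁ : β * p 1 - α * p n = 1) (h₂ : β * p 2 - α * p 1 = -2) (h₃ : β * p 3 - α * p 2 = -1)
    (h : ∀ i, 3 ≤ i → i < n → β * p (i + 1) - α * p i = 0) :
    (circMat n pell)⁻¹ = circMat n p := by
  obtain ⟨m, rfl⟩ : ∃ m, n = m + 3 := ⟨n - 3, by omega⟩
  set U := cycShift (m + 3)
  have hU : U ^ (m + 3) = 1 := cycShift_pow_self
  have hA : (1 - 2 * U - U ^ 2) * circMat (m + 3) pell = β • 1 - α • U := by
    rw [circMat_eq_sum, mul_sum_pell_smul_pow, hU, pow_succ, hU, one_mul, hα, hβ, sub_smul,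
      pell_one, one_smul]
  have hB : (β • 1 - α • U) * circMat (m + 3) p = 1 - 2 * U - U ^ 2 := by
    rw [circMat_eq_sum, smul_one_sub_smul_mul_sum hU, h₁, sum_range_succ', sum_range_succ',
      sum_eq_zero fun k hk => by rw [h (k + 3) (by omega) (by simp at hk; omega), zero_smul]]
    rw [h₂, h₃, two_mul]
    simp only [zero_add, pow_one, show 1 + 1 = 2 from rfl]
    module
  apply Matrix.inv_eq_left_inv
  apply isLeftRegular_smul_one_sub_smul hU hαβ
  change _ * (_ * _) = _ * 1
  rw [← mul_assoc, hB, hA, mul_one]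

lemma ne_zero_of_eq_pellRevSum {n : ℕ} (hn : 2 ≤ n) {α β g : ℚ} (hα : α = pell n)
    (hβ : β = pell 1 - pell (n + 1)) (hβ0 : β ≠ 0) (hαβ : β ^ n ≠ α ^ n)
    (hg : g = pell 1 - 2 * α + α / β * pellRevSum (α / β) (n - 2)) : g ≠ 0 := by
  obtain ⟨m, rfl⟩ : ∃ m, n = m + 2 := ⟨n - 2, by omega⟩
  obtain ⟨r, rfl⟩ : ∃ r, α = r * β := ⟨α / β, (div_mul_cancel₀ α hβ0).symm⟩
  simp only [mul_div_cancel_right₀ r hβ0, Nat.add_sub_cancel, pell_one] at hg hβ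
  obtain ⟨hm1, hm⟩ := pell_add_one_and_pell_eq hα hβ
  have hg_mul : g * (1 + 2 * r - r ^ 2) = 1 - r ^ (m + 2) := by
    have hQ := mul_pellRevSum r m
    rw [hm1, hm] at hQ
    rw [hg]
    linear_combination (-r) * hQ
  intro hg0
  rw [hg0, zero_mul, eq_comm, sub_eq_zero] at hg_mul
  exact hαβ (by rw [mul_pow, ← hg_mul, one_mul])

lemma pellInv_rec_of_lt_three {n : ℕ} (hn : 3 ≤ n) {α β g : ℚ} {p : ℕ → ℚ} (hα : α = pell n)
    (hβ : β = pell 1 - pell (n + 1)) (hβ0 : β ≠ 0) (hg0 : g ≠ 0)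
    (hg : g = pell 1 - 2 * α + α / β * pellRevSum (α / β) (n - 2))
    (hp1 : p 1 = 1 / g * (1 + (pellRevSum (α / β) (n - 1) - (α / β) ^ (n - 2)) / β))
    (hp2 : p 2 = 1 / g * (-2 + pellRevSum (α / β) (n - 2) / β))
    (hpi : ∀ i, 3 ≤ i → i ≤ n → p i = -α ^ (i - 3) / (g * β ^ (i - 2))) :
    β * p 1 - α * p n = 1 ∧ β * p 2 - α * p 1 = -2 ∧ β * p 3 - α * p 2 = -1 := by
  obtain ⟨m, rfl⟩ : ∃ m, n = m + 3 := ⟨n - 3, by omega⟩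
  obtain ⟨r, rfl⟩ : ∃ r, α = r * β := ⟨α / β, (div_mul_cancel₀ α hβ0).symm⟩
  simp only [mul_div_cancel_right₀ r hβ0, pell_one, show m + 3 - 1 = m + 2 by omega,
    show m + 3 - 2 = m + 1 by omega] at hg hp1 hp2 hβ
  obtain ⟨hm2, hm1⟩ := pell_add_one_and_pell_eq (m := m + 1) hα hβ
  have hQ := mul_pellRevSum r (m + 1)
  rw [hm2, hm1] at hQ
  rw [pellRevSum_succ, hm2] at hp1
  refine ⟨?_, ?_, ?_⟩
  · rw [hp1, hpi (m + 3) (by omega) le_rfl, show m + 3 - 3 = m by omega,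
      show m + 3 - 2 = m + 1 by omega]
    field_simp
    linear_combination (-β ^ (m + 1)) * hg
  · rw [hp1, hp2]
    field_simp
    linear_combination 2 * hg - hQ
  · rw [hp2, hpi 3 le_rfl (by omega), Nat.sub_self, show 3 - 2 = 1 from rfl, pow_zero, pow_one]
    field_simp
    linear_combination hg

lemma pellInv_rec_of_three_le {n : ℕ} {α β g : ℚ} {p : ℕ → ℚ} (hβ0 : β ≠ 0)
    (hpi : ∀ i, 3 ≤ i → i ≤ n → p i = -α ^ (i - 3) / (g * β ^ (i - 2))) :
    ∀ i, 3 ≤ i → i < n → β * p (i + 1) - α * p i = 0 := by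
  intro i hi hin
  obtain ⟨j, rfl⟩ : ∃ j, i = j + 3 := ⟨i - 3, by omega⟩
  rw [hpi _ (by omega) hin.le, hpi _ (by omega) (by omega)]
  simp only [show j + 3 + 1 - 3 = j + 1 by omega, show j + 3 + 1 - 2 = j + 2 by omega,
    show j + 3 - 3 = j by omega, show j + 3 - 2 = j + 1 by omega]
  field_simp
  ring

theorem circ_pell_inverse (n : ℕ) (hn : 3 ≤ n)
    (g : ℚ) (hg : g = pell 1 - 2 * pell n +
      ∑ k ∈ Finset.Icc 2 (n - 1), pell (k - 1) * (pell n / (pell 1 - pell (n + 1))) ^ (n - k))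
    (p : ℕ → ℚ)
    (hp1 : p 1 = (1 / g) * (1 + 2 * pell n ^ (n - 3) / (pell 1 - pell (n + 1)) ^ (n - 2) +
      ∑ k ∈ Finset.Icc 1 (n - 3), pell (n - k) * pell n ^ (k - 1) / (pell 1 - pell (n + 1)) ^ k))
    (hp2 : p 2 = (1 / g) * (-2 +
      ∑ k ∈ Finset.Icc 1 (n - 2), pell (n - k - 1) * pell n ^ (k - 1) / (pell 1 - pell (n + 1)) ^ k))
    (hpi : ∀ i, 3 ≤ i → i ≤ n →
      p i = -(pell n ^ (i - 3)) / (g * (pell 1 - pell (n + 1)) ^ (i - 2))) :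
    (circMat n pell)⁻¹ = circMat n p := by
  set α := pell n with hα
  set β := pell 1 - pell (n + 1) with hβ
  have hαβ : |α| < |β| := abs_pell_lt_abs_one_sub_pell_succ (by omega)
  have hβ0 : β ≠ 0 := abs_pos.mp ((abs_nonneg α).trans_lt hαβ)
  have hpow : β ^ n ≠ α ^ n := fun h =>
    (pow_lt_pow_left₀ hαβ (abs_nonneg α) (by omega : n ≠ 0)).ne (by rw [← abs_pow, ← abs_pow, h])
  rw [sum_Icc_two_pell_mul_pow] at hg
  rw [add_assoc, two_mul_pow_div_add_sum_Icc_pell_sub hn] at hp1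
  rw [sum_Icc_pell_sub_sub_one_div] at hp2
  have hg0 := ne_zero_of_eq_pellRevSum (by omega) hα hβ hβ0 hpow hg
  obtain ⟨h₁, h₂, h₃⟩ := pellInv_rec_of_lt_three hn hα hβ hβ0 hg0 hg hp1 hp2 hpi
  exact inv_circMat_pell hn hα hβ hpow h₁ h₂ h₃ (pellInv_rec_of_three_le hβ0 hpi)
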